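/- arXiv:2601.03828 — 5 statements merged into one kernel-verified Lean document; each statement's English description precedes it below -/
import Mathlib

section
/- Let A = (A^m)_{m≥1} be a collection with A^m ∈ Q((x_1,...,x_m)) satisfying A^m(x_1,...,x_m) = A^{m-1}(x_1,...,x_{m-1}) − A^{m-1}(x_2,...,x_m) for all m ≥ 2. Then A is alternal: for all p,q ≥ 1, the sum of A^{p+q} evaluated over all shuffles of (x_1,...,x_p) with (x_{p+1},...,x_{p+q}) vanishes. -/
open scoped BigOperators

/-- All shuffle interleavings of two lists, preserving the relative order of each. -/
def shuffles {α : Type*} : List α → List α → List (List α)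
  | [], ys => [ys]
  | xs, [] => [xs]
  | x :: xs, y :: ys =>
      ((shuffles xs (y :: ys)).map (x :: ·)) ++ ((shuffles (x :: xs) ys).map (y :: ·))
termination_by xs ys => xs.length + ys.length
decreasing_by all_goals (simp; try omega)

variable {K : Type*} [Field K]

/-- The shuffle sum of a mould `M` over all interleavings of `a` and `b`. -/
def shSum (M : List K → K) (a b : List K) : K := ((shuffles a b).map M).sum

/-- The mould (concatenation-deconcatenation) product. -/
def mmul (M N : List K → K) (w : List K) : K :=
  ∑ k ∈ Finset.range (w.length + 1), M (w.take k) * N (w.drop k)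

/-- The unit mould: `1` in length `0` and `0` otherwise. -/
def one : List K → K := fun l => match l with | [] => 1 | _ => 0

/-!
For a word `w` of length at least two the recursion reads `A w = A w.dropLast - A w.tail`.
Summing it over the shuffles of `a` and `b`, and sorting the shuffles by which word supplies
their first (resp. last) letter, gives
`Sh(a, b) = (Sh(a.dropLast, b) - Sh(a.tail, b)) + (Sh(a, b.dropLast) - Sh(a, b.tail))`.
Both brackets vanish: for a one-letter word, `dropLast` and `tail` are both empty; for a longer
one, both shuffle sums vanish by induction on `|a| + |b|`.
-/

open List

section Shuffles

variable {α : Type*}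

@[simp]
lemma shuffles_nil_left (ys : List α) : shuffles [] ys = [ys] := by
  cases ys <;> rw [shuffles]

@[simp]
lemma shuffles_nil_right (xs : List α) : shuffles xs [] = [xs] := by
  cases xs <;> simp [shuffles]

lemma shuffles_cons_cons (x y : α) (xs ys : List α) :
    shuffles (x :: xs) (y :: ys)
      = (shuffles xs (y :: ys)).map (x :: ·) ++ (shuffles (x :: xs) ys).map (y :: ·) := by
  rw [shuffles]

lemma perm_append_of_mem_shuffles {a b w : List α} (hw : w ∈ shuffles a b) : w ~ a ++ b := by
  induction a, b using shuffles.induct generalizing w with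
  | case1 ys => simp_all
  | case2 xs => simp_all
  | case3 x xs y ys ih₁ ih₂ =>
    simp only [shuffles_cons_cons, mem_append, mem_map] at hw
    rcases hw with ⟨w, hw, rfl⟩ | ⟨w, hw, rfl⟩
    · exact (ih₁ hw).cons x
    · exact ((ih₂ hw).cons y).trans perm_middle.symm

lemma length_eq_of_mem_shuffles {a b w : List α} (hw : w ∈ shuffles a b) :
    w.length = a.length + b.length := by
  rw [(perm_append_of_mem_shuffles hw).length_eq, length_append]

lemma dropLast_eq_tail_of_length_le_one : ∀ {l : List α}, l.length ≤ 1 → l.dropLast = l.tail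
  | [], _ | [_], _ => rfl

lemma apply_dropLast_eq_apply_tail {β : Type*} [Zero β] (f : List α → β) {l : List α}
    (h : ∀ c, c ≠ [] → c.length < l.length → f c = 0) : f l.dropLast = f l.tail := by
  rcases le_or_gt l.length 1 with hl | hl
  · rw [dropLast_eq_tail_of_length_le_one hl]
  · have h₁ : l.dropLast.length = l.length - 1 := length_dropLast
    have h₂ : l.tail.length = l.length - 1 := length_tail
    rw [h _ (ne_nil_of_length_pos (by omega)) (by omega),
      h _ (ne_nil_of_length_pos (by omega)) (by omega)]

lemma shuffles_append_singleton_perm (x y : α) (u v : List α) :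
    shuffles (u ++ [x]) (v ++ [y])
      ~ (shuffles u (v ++ [y])).map (· ++ [x]) ++ (shuffles (u ++ [x]) v).map (· ++ [y]) := by
  induction u generalizing v with
  | nil =>
    induction v with
    | nil => simpa [shuffles_cons_cons] using .swap ..
    | cons y' v ih =>
      simp only [nil_append, cons_append, shuffles_cons_cons, shuffles_nil_left, map_cons, map_nil,
        map_map] at ih ⊢
      exact ((ih.map (y' :: ·)).cons _).trans (by simpa [Function.comp_def] using .swap ..)
  | cons x' u ihu =>
    induction v with
    | nil =>
      have := (ihu []).map (x' :: ·)
      simp only [nil_append, cons_append, shuffles_cons_cons, shuffles_nil_right, map_cons, map_nil,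
        map_append, map_map] at this ⊢
      refine (this.append_right _).trans ?_
      simpa [Function.comp_def] using (Perm.swap _ _ []).append_left _
    | cons y' v ihv =>
      have := ((ihu (y' :: v)).map (x' :: ·)).append (ihv.map (y' :: ·))
      simp only [cons_append, shuffles_cons_cons, map_append, map_map] at this ⊢
      refine this.trans ?_
      simpa [Function.comp_def] using (perm_append_comm_assoc _ _ _).append_left _

variable {M : Type*} [AddCommMonoid M]

lemma sum_map_tail_shuffles (F : List α → M) {a b : List α} (ha : a ≠ []) (hb : b ≠ []) :
    ((shuffles a b).map (fun w => F w.tail)).sum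
      = ((shuffles a.tail b).map F).sum + ((shuffles a b.tail).map F).sum := by
  obtain ⟨x, xs, rfl⟩ := exists_cons_of_ne_nil ha
  obtain ⟨y, ys, rfl⟩ := exists_cons_of_ne_nil hb
  simp [shuffles_cons_cons, Function.comp_def]

lemma sum_map_dropLast_shuffles (F : List α → M) {a b : List α} (ha : a ≠ []) (hb : b ≠ []) :
    ((shuffles a b).map (fun w => F w.dropLast)).sum
      = ((shuffles a.dropLast b).map F).sum + ((shuffles a b.dropLast).map F).sum := by
  obtain ⟨u, x, rfl⟩ := (eq_nil_or_concat' a).resolve_left ha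
  obtain ⟨v, y, rfl⟩ := (eq_nil_or_concat' b).resolve_left hb
  rw [((shuffles_append_singleton_perm x y u v).map _).sum_eq]
  simp [Function.comp_def]

end Shuffles

section Mould

variable (A : List K → K) {a b : List K}
  (hrec : ∀ (x y : K) (l : List K), A (x :: (l ++ [y])) = A (x :: l) - A (l ++ [y]))
include hrec

lemma eq_dropLast_sub_tail_of_rec {w : List K} (hw : 2 ≤ w.length) :
    A w = A w.dropLast - A w.tail := by
  obtain _ | ⟨x, t⟩ := w
  · simp at hw
  obtain ⟨l, y, rfl⟩ := (eq_nil_or_concat' t).resolve_left (by rintro rfl; simp at hw)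
  rw [hrec, ← cons_append, dropLast_concat]
  rfl

lemma shSum_eq_of_rec (ha : a ≠ []) (hb : b ≠ []) :
    shSum A a b = (shSum A a.dropLast b - shSum A a.tail b)
      + (shSum A a b.dropLast - shSum A a b.tail) := by
  have hsplit : shSum A a b + ((shuffles a b).map (fun w => A w.tail)).sum
      = ((shuffles a b).map (fun w => A w.dropLast)).sum := by
    rw [shSum, ← sum_map_add]
    refine congrArg sum (map_congr_left fun w hw => ?_)
    have hlen : 2 ≤ w.length := by
      rw [length_eq_of_mem_shuffles hw]
      have := length_pos_of_ne_nil ha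
      have := length_pos_of_ne_nil hb
      omega
    rw [eq_dropLast_sub_tail_of_rec A hrec hlen, sub_add_cancel]
  rw [sum_map_tail_shuffles _ ha hb, sum_map_dropLast_shuffles _ ha hb] at hsplit
  simp only [shSum] at hsplit ⊢
  linear_combination hsplit

end Mould

/-- a mould satisfying the recursion
`A^m(x_1,…,x_m) = A^{m-1}(x_1,…,x_{m-1}) − A^{m-1}(x_2,…,x_m)` (m ≥ 2) is alternal. -/
theorem stmt0 {K : Type*} [Field K] (A : List K → K)
    (hrec : ∀ (x y : K) (l : List K), A (x :: (l ++ [y])) = A (x :: l) - A (l ++ [y])) :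
    ∀ a b : List K, a ≠ [] → b ≠ [] → shSum A a b = 0 := by
  intro a b ha hb
  induction hn : a.length + b.length using Nat.strong_induction_on generalizing a b with
  | _ n ih =>
  have hl : shSum A a.dropLast b = shSum A a.tail b :=
    apply_dropLast_eq_apply_tail (shSum A · b) fun c hc _ => ih _ (by omega) c b hc hb rfl
  have hr : shSum A a b.dropLast = shSum A a b.tail :=
    apply_dropLast_eq_apply_tail (shSum A a ·) fun d hd _ => ih _ (by omega) a d ha hd rfl
  rw [shSum_eq_of_rec A hrec ha hb, hl, hr, sub_self, sub_self, add_zero]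
end

section
/- For the polynomial A^m(x_1,...,x_m) := Σ_{k=0}^{m-1} (−1)^k C(m−1,k) x_{k+1}, and for any p,q ≥ 1, the sum of A^{p+q} over all shuffle interleavings of (x_1,...,x_p) with (x_{p+1},...,x_{p+q}) is zero. -/
open scoped BigOperators

variable {K : Type*} [Field K]

/-- `A^m(x_1,…,x_m) = Σ_{k=0}^{m-1} (−1)^k C(m−1,k) x_{k+1}`. -/
def Apoly {K : Type*} [Field K] (l : List K) : K :=
  ∑ k ∈ Finset.range l.length, (-1 : K) ^ k * ((l.length - 1).choose k : K) * l.getD k 0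

section SS
variable {α : Type*} {M : Type*} [AddCommMonoid M]

/-- General shuffle sum. -/
def SS (f : List α → M) (a b : List α) : M := ((shuffles a b).map f).sum

lemma sh_nil_left (b : List α) : shuffles [] b = [b] := by simp [shuffles]
lemma sh_nil_right (a : List α) : shuffles a [] = [a] := by cases a <;> simp [shuffles]
lemma sh_cons_cons (x y : α) (xs ys : List α) : shuffles (x::xs) (y::ys) =
    ((shuffles xs (y :: ys)).map (x :: ·)) ++ ((shuffles (x :: xs) ys).map (y :: ·)) := by
  simp [shuffles]

lemma length_mem_shuffles (a b : List α) (w : List α) (h : w ∈ shuffles a b) :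
    w.length = a.length + b.length := by
  induction a, b using shuffles.induct generalizing w
  · simp [shuffles] at h; simp [h]
  · simp [shuffles] at h; simp [h]
  · rename_i x xs y ys ih1 ih2
    rw [sh_cons_cons] at h
    simp only [List.mem_append, List.mem_map] at h
    rcases h with ⟨u, hu, rfl⟩ | ⟨u, hu, rfl⟩
    · simp [ih1 u hu]; omega
    · simp [ih2 u hu]; omega

lemma SS_nil_left (f : List α → M) (b : List α) : SS f [] b = f b := by
  simp [SS, sh_nil_left]
lemma SS_nil_right (f : List α → M) (a : List α) : SS f a [] = f a := by
  simp [SS, sh_nil_right]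
lemma SS_cons_cons (f : List α → M) (x y : α) (xs ys : List α) :
    SS f (x::xs) (y::ys) = SS (fun w => f (x::w)) xs (y::ys)
      + SS (fun w => f (y::w)) (x::xs) ys := by
  simp [SS, sh_cons_cons, Function.comp_def]

lemma SS_congr {f g : List α → M} {a b : List α}
    (h : ∀ w ∈ shuffles a b, f w = g w) : SS f a b = SS g a b := by
  unfold SS
  rw [List.map_congr_left h]

lemma SS_single_right (x y : α) (b : List α) (f : List α → M) :
    SS f [x] (b ++ [y]) = f ((b ++ [y]) ++ [x]) + SS (fun w => f (w ++ [y])) [x] b := by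
  induction b generalizing f with
  | nil =>
    simp only [List.nil_append, SS_cons_cons, SS_nil_left, SS_nil_right]
    simp only [List.append_assoc, List.singleton_append, List.cons_append, List.nil_append]
    exact add_comm _ _
  | cons z b' ih =>
    simp only [List.cons_append]
    rw [SS_cons_cons, SS_cons_cons, SS_nil_left, SS_nil_left, ih]
    simp only [List.cons_append]
    abel

lemma SS_single_left (x y : α) (a : List α) (f : List α → M) :
    SS f (a ++ [x]) [y] = SS (fun w => f (w ++ [x])) a [y] + f ((a ++ [x]) ++ [y]) := by
  induction a generalizing f with
  | nil =>
    simp only [List.nil_append, SS_cons_cons, SS_nil_left, SS_nil_right]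
    exact add_comm _ _
  | cons z a' ih =>
    simp only [List.cons_append]
    rw [SS_cons_cons, SS_cons_cons, SS_nil_right, SS_nil_right, ih]
    simp only [List.cons_append]
    abel

/-- The "snoc" recursion for shuffle sums, mirror image of the defining recursion. -/
lemma SS_snoc (x y : α) :
    ∀ (n : ℕ) (a b : List α) (f : List α → M), a.length + b.length ≤ n →
    SS f (a ++ [x]) (b ++ [y])
      = SS (fun w => f (w ++ [x])) a (b ++ [y]) + SS (fun w => f (w ++ [y])) (a ++ [x]) b := by
  intro n
  induction n with
  | zero =>
    intro a b f h
    have ha : a = [] := by cases a <;> simp_all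
    have hb : b = [] := by cases b <;> simp_all
    subst ha; subst hb
    simp only [List.nil_append, SS_cons_cons, SS_nil_left, SS_nil_right]
    exact add_comm _ _
  | succ n ih =>
    intro a b f h
    match a, b with
    | [], b =>
      simp only [List.nil_append]
      rw [SS_single_right, SS_nil_left]
    | z :: a', [] =>
      simp only [List.nil_append]
      rw [SS_single_left, SS_nil_right]
    | z :: a', v :: b' =>
      simp only [List.cons_append]
      rw [SS_cons_cons, SS_cons_cons, SS_cons_cons]
      rw [show v :: (b' ++ [y]) = (v :: b') ++ [y] from rfl,
          show z :: (a' ++ [x]) = (z :: a') ++ [x] from rfl]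
      rw [ih a' (v :: b') (fun u => f (z :: u)) (by simp at h ⊢; omega)]
      rw [ih (z :: a') b' (fun u => f (v :: u)) (by simp at h ⊢; omega)]
      simp only [List.cons_append]
      abel
end SS

lemma map_sum_sub {α : Type*} (l : List α) (f g : α → K) :
    (l.map (fun w => f w - g w)).sum = (l.map f).sum - (l.map g).sum := by
  induction l with
  | nil => simp
  | cons x t ih => simp [ih]; ring

lemma SS_sub (f g : List K → K) (a b : List K) :
    SS (fun w => f w - g w) a b = SS f a b - SS g a b :=
  map_sum_sub _ _ _

lemma getD_tail' (w : List K) (k : ℕ) : w.tail.getD k 0 = w.getD (k+1) 0 := by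
  cases w <;> rfl

lemma getD_dropLast' (w : List K) (k : ℕ) (hk : k + 1 < w.length) :
    w.dropLast.getD k 0 = w.getD k 0 := by
  have h1 : k < w.dropLast.length := by simp; omega
  have h2 : k < w.length := by omega
  rw [List.getD_eq_getElem _ _ h1, List.getD_eq_getElem _ _ h2, List.getElem_dropLast]

/-- The key recursion: `Apoly` of a word is `Apoly` of its dropLast minus `Apoly` of its tail. -/
lemma Apoly_split (w : List K) (h : 2 ≤ w.length) :
    Apoly w = Apoly w.dropLast - Apoly w.tail := by
  obtain ⟨n, hn⟩ : ∃ n, w.length = n + 2 := ⟨w.length - 2, by omega⟩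
  have hd : w.dropLast.length = n + 1 := by simp [hn]
  have ht : w.tail.length = n + 1 := by simp [hn]
  rw [Apoly, Apoly, Apoly, hn, hd, ht]
  simp only [Nat.add_sub_cancel, show n+2-1=n+1 from rfl]
  have htail : ∀ k ∈ Finset.range (n+1),
      (-1 : K) ^ k * ((n).choose k : K) * w.tail.getD k 0
        = (-1 : K) ^ k * ((n).choose k : K) * w.getD (k+1) 0 := by
    intro k _; rw [getD_tail']
  have hdrop : ∀ k ∈ Finset.range (n+1),
      (-1 : K) ^ k * ((n).choose k : K) * w.dropLast.getD k 0
        = (-1 : K) ^ k * ((n).choose k : K) * w.getD k 0 := by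
    intro k hk
    rw [getD_dropLast' _ _ (by simp at hk; omega)]
  rw [Finset.sum_congr rfl htail, Finset.sum_congr rfl hdrop]
  set g : ℕ → K := fun k => (-1 : K) ^ k * ((n).choose k : K) * w.getD k 0 with hg
  rw [Finset.sum_range_succ']
  have hsplit : ∀ k ∈ Finset.range (n+1),
      (-1 : K) ^ (k+1) * ((n+1).choose (k+1) : K) * w.getD (k+1) 0
        = -((-1 : K) ^ k * ((n).choose k : K) * w.getD (k+1) 0) + g (k+1) := by
    intro k _
    rw [Nat.choose_succ_succ]
    push_cast
    simp only [hg]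
    ring
  rw [Finset.sum_congr rfl hsplit, Finset.sum_add_distrib]
  have e1 : ∑ k ∈ Finset.range (n+1), g (k+1)
      = ∑ k ∈ Finset.range (n+1), g k - g 0 := by
    have := Finset.sum_range_succ' g (n+1)
    have h2 := Finset.sum_range_succ g (n+1)
    have hz : g (n+1) = 0 := by simp [hg, Nat.choose_succ_self]
    rw [hz] at h2
    rw [h2] at this
    linear_combination -this
  rw [e1]
  have hg0 : g 0 = w.getD 0 0 := by simp [hg]
  simp only [Finset.sum_neg_distrib]
  rw [hg0]
  simp only [pow_zero, Nat.choose_zero_right, Nat.cast_one, one_mul, mul_one]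
  ring

/-- the shuffle sums of `Apoly` all vanish. -/
theorem stmt3 {K : Type*} [Field K] (a b : List K) (ha : a ≠ []) (hb : b ≠ []) :
    shSum (Apoly : List K → K) a b = 0 := by
  suffices H : ∀ (n : ℕ) (a b : List K), a.length + b.length ≤ n → a ≠ [] → b ≠ [] →
      SS (Apoly : List K → K) a b = 0 by
    exact H (a.length + b.length) a b le_rfl ha hb
  intro n
  induction n with
  | zero =>
    intro a b h ha hb
    cases a with
    | nil => exact absurd rfl ha
    | cons x t => simp at h
  | succ n ih =>
    intro a b hlen ha hb
    obtain ⟨x, a', rfl⟩ := List.exists_cons_of_ne_nil ha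
    obtain ⟨y, b', rfl⟩ := List.exists_cons_of_ne_nil hb
    obtain ⟨A, u, hA⟩ : ∃ A u, x :: a' = A ++ [u] :=
      ⟨(x :: a').dropLast, (x :: a').getLast (by simp),
        (List.dropLast_append_getLast (by simp)).symm⟩
    obtain ⟨B, v, hB⟩ : ∃ B v, y :: b' = B ++ [v] :=
      ⟨(y :: b').dropLast, (y :: b').getLast (by simp),
        (List.dropLast_append_getLast (by simp)).symm⟩
    have hAlen : A.length = a'.length := by
      have := congrArg List.length hA; simp at this; omega
    have hBlen : B.length = b'.length := by
      have := congrArg List.length hB; simp at this; omega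
    -- Step 1: split Apoly into dropLast and tail parts
    have key : ∀ w ∈ shuffles (x :: a') (y :: b'),
        Apoly w = Apoly w.dropLast - Apoly w.tail := by
      intro w hw
      exact Apoly_split w (by rw [length_mem_shuffles _ _ _ hw]; simp; omega)
    have step1 : SS (Apoly : List K → K) (x :: a') (y :: b')
        = SS (fun w => Apoly w.dropLast) (x :: a') (y :: b')
          - SS (fun w => Apoly w.tail) (x :: a') (y :: b') := by
      rw [SS_congr key, SS_sub]
    -- Step 2: the tail part
    have step2 : SS (fun w : List K => Apoly w.tail) (x :: a') (y :: b')
        = SS (Apoly : List K → K) a' (y :: b') + SS (Apoly : List K → K) (x :: a') b' := by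
      rw [SS_cons_cons]
      simp only [List.tail_cons]
    -- Step 3: the dropLast part
    have step3 : SS (fun w : List K => Apoly w.dropLast) (x :: a') (y :: b')
        = SS (Apoly : List K → K) A (y :: b') + SS (Apoly : List K → K) (x :: a') B := by
      rw [hA, hB]
      rw [SS_snoc u v (A.length + B.length) A B _ le_rfl]
      simp only [List.dropLast_concat]
    -- Step 4: cancellation
    have h1 : SS (Apoly : List K → K) A (y :: b') = SS (Apoly : List K → K) a' (y :: b') := by
      cases ha' : a' with
      | nil =>
        have : A = [] := by rw [ha'] at hAlen; exact List.length_eq_zero_iff.mp hAlen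
        rw [this]
      | cons z t =>
        have hA' : A ≠ [] := by
          intro h; rw [h] at hAlen; simp [ha'] at hAlen
        have hl : a'.length = t.length + 1 := by simp [ha']
        rw [ih A (y :: b') (by simp only [List.length_cons] at hlen ⊢; omega) hA' (by simp),
            ih (z :: t) (y :: b') (by simp only [List.length_cons] at hlen ⊢; omega)
              (by simp) (by simp)]
    have h2 : SS (Apoly : List K → K) (x :: a') B = SS (Apoly : List K → K) (x :: a') b' := by
      cases hb' : b' with
      | nil =>
        have : B = [] := by rw [hb'] at hBlen; exact List.length_eq_zero_iff.mp hBlen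
        rw [this]
      | cons z t =>
        have hB' : B ≠ [] := by
          intro h; rw [h] at hBlen; simp [hb'] at hBlen
        have hl : b'.length = t.length + 1 := by simp [hb']
        rw [ih (x :: a') B (by simp only [List.length_cons] at hlen ⊢; omega) (by simp) hB',
            ih (x :: a') (z :: t) (by simp only [List.length_cons] at hlen ⊢; omega)
              (by simp) (by simp)]
    show SS (Apoly : List K → K) (x :: a') (y :: b') = 0
    rw [step1, step2, step3, h1, h2]
    ring
end

section
/- Brown's polar solution ψ_{−1} satisfies, after the change of variables # (substituting x_j ↦ x_1 + ... + x_j), the identity ψ_{−1}^#(x_1,...,x_d) = (1/(x_1+...+x_d)) · log(paj)(x_1,...,x_d) for all d ≥ 1, where log is with respect to the mould product × and paj^m(x_1,...,x_m) = 1/(x_1(x_1+x_2)···(x_1+...+x_m)). -/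
open scoped BigOperators

variable {K : Type*} [Field K]

/-- The mould `paj`: `paj^m(x_1,…,x_m) = 1/(x_1(x_1+x_2)⋯(x_1+⋯+x_m))`, `paj^0 = 1`. -/
noncomputable def paj {K : Type*} [Field K] (l : List K) : K :=
  (∏ k ∈ Finset.range l.length, (l.take (k + 1)).sum)⁻¹

/-- Iterated ×-powers of a mould. -/
def mpow (M : List K → K) : ℕ → List K → K
  | 0 => one
  | n + 1 => mmul (mpow M n) M

/-- Strictly increasing chains `0 = i_0 < i_1 < ⋯ < i_h = d`. -/
def chains (h d : ℕ) : Finset (Fin (h + 1) → Fin (d + 1)) :=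
  Finset.univ.filter fun f =>
    (∀ i j : Fin (h + 1), i < j → f i < f j) ∧ f 0 = 0 ∧ f (Fin.last h) = Fin.last d

/-- Brown's polar solution `ψ_{−1}^{(d)}(y_1,…,y_d)
  = (1/y_d) Σ_{h=1}^d ((−1)^{h+1}/h) Σ_{0=i_0<⋯<i_h=d} ∏_{s<h} 1/∏_{i_s<j≤i_{s+1}}(y_j − y_{i_s})`,
with `y_0 = 0`, as a function of `y : ℕ → K`. -/
noncomputable def psiNegOne {K : Type*} [Field K] (d : ℕ) (y : ℕ → K) : K :=
  (y d)⁻¹ * ∑ h ∈ Finset.Icc 1 d, ((-1 : K) ^ (h + 1) / (h : K)) *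
    ∑ f ∈ chains h d, ∏ s : Fin h,
      (∏ j ∈ Finset.Ioc (f s.castSucc : ℕ) (f s.succ : ℕ),
        (y j - y (f s.castSucc : ℕ)))⁻¹

/-!
Both sides are sums over chains `0 = i_0 < ⋯ < i_h = d` with the same coefficients
`(-1)^(h+1)/h`. Since `paj - 1` vanishes on the empty word, its `h`-th ×-power expands into a
sum over the decompositions of the word into `h` nonempty consecutive blocks, i.e. over such
chains, of the product of `paj` on the blocks; the expansion follows by induction on `h`,
splitting a chain at its penultimate entry. After the substitution `#`, `paj` of the block
`(x_{i+1}, …, x_j)` is `1/∏_{i<m≤j} (y_m - y_i)` with `y` the partial sums, which is exactly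
the factor of `ψ_{-1}` attached to the step `i → j`.
-/

lemma mem_chains {h d : ℕ} {f : Fin (h + 1) → Fin (d + 1)} :
    f ∈ chains h d ↔ StrictMono f ∧ f 0 = 0 ∧ f (Fin.last h) = Fin.last d := by
  simp [chains, StrictMono]

lemma chains_zero (d : ℕ) : chains 0 d = if d = 0 then {0} else ∅ := by
  ext f
  split_ifs with hd
  · subst hd
    rw [mem_chains, Finset.mem_singleton]
    refine ⟨fun h => funext fun i => by rw [Fin.eq_zero i, h.2.1]; rfl, ?_⟩
    rintro rfl
    exact ⟨fun i j hij => by omega, rfl, rfl⟩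
  · simp only [mem_chains, Finset.notMem_empty, iff_false, not_and]
    intro _ h0 hlast
    rw [Fin.last_zero, h0, eq_comm, Fin.last_eq_zero_iff] at hlast
    exact hd hlast

section LastStep

variable {h d k : ℕ}

-- `Fin.clamp` only makes the map total; it is harmless on chains with penultimate entry `k`.
def chainInit (k : ℕ) (f : Fin (h + 2) → Fin (d + 1)) : Fin (h + 1) → Fin (k + 1) :=
  fun i => Fin.clamp (f i.castSucc) k

def chainSnoc (hk : k ≤ d) (g : Fin (h + 1) → Fin (k + 1)) : Fin (h + 2) → Fin (d + 1) :=
  Fin.snoc (Fin.castLE (by omega) ∘ g) (Fin.last d)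

lemma val_chainInit {f : Fin (h + 2) → Fin (d + 1)} (hf : Monotone f)
    (hk : (f (Fin.last h).castSucc : ℕ) = k) (i : Fin (h + 1)) :
    (chainInit k f i : ℕ) = f i.castSucc := by
  have : f i.castSucc ≤ f (Fin.last h).castSucc := hf (Fin.castSucc_le_castSucc_iff.2 i.le_last)
  simp only [chainInit, Fin.coe_clamp]
  omega

lemma chainInit_mem {f : Fin (h + 2) → Fin (d + 1)} (hf : f ∈ chains (h + 1) d)
    (hk : (f (Fin.last h).castSucc : ℕ) = k) : chainInit k f ∈ chains h k := by
  obtain ⟨hmono, h0, hlast⟩ := mem_chains.1 hf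
  have hval := val_chainInit hmono.monotone hk
  refine mem_chains.2 ⟨fun i j hij => ?_, Fin.ext ?_, Fin.ext ?_⟩
  · rw [Fin.lt_def, hval, hval]
    exact hmono (Fin.castSucc_lt_castSucc_iff.2 hij)
  · rw [hval]; simp [h0]
  · rw [hval, hk]; simp

lemma chainSnoc_mem {g : Fin (h + 1) → Fin (k + 1)} (hg : g ∈ chains h k) (hk : k < d) :
    chainSnoc hk.le g ∈ chains (h + 1) d := by
  obtain ⟨hmono, h0, hlast⟩ := mem_chains.1 hg
  refine mem_chains.2 ⟨?_, ?_, by simp [chainSnoc]⟩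
  · rw [chainSnoc, ← Fin.insertNth_last']
    refine Fin.strictMono_insertNth_last ((Fin.strictMono_castLE _).comp hmono) _ ?_
    simp [hlast, Fin.lt_def, hk]
  · rw [chainSnoc, ← Fin.castSucc_zero, Fin.snoc_castSucc, Function.comp_apply, h0]
    rfl

lemma chainInit_chainSnoc (hk : k ≤ d) (g : Fin (h + 1) → Fin (k + 1)) :
    chainInit k (chainSnoc hk g) = g := by
  funext i
  ext
  simp [chainInit, chainSnoc, (g i).is_le]

lemma chainSnoc_chainInit {f : Fin (h + 2) → Fin (d + 1)} (hf : f ∈ chains (h + 1) d)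
    (hk : (f (Fin.last h).castSucc : ℕ) = k) (hkd : k ≤ d) :
    chainSnoc hkd (chainInit k f) = f := by
  obtain ⟨hmono, -, hlast⟩ := mem_chains.1 hf
  funext i
  induction i using Fin.lastCases with
  | last => simp [chainSnoc, hlast]
  | cast i => ext; simp [chainSnoc, val_chainInit hmono.monotone hk]

end LastStep

def chainSum (T : ℕ → ℕ → K) (h d : ℕ) : K :=
  ∑ f ∈ chains h d, ∏ s : Fin h, T (f s.castSucc) (f s.succ)

lemma chainSum_zero (T : ℕ → ℕ → K) (d : ℕ) : chainSum T 0 d = if d = 0 then 1 else 0 := by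
  rw [chainSum, chains_zero]
  split_ifs <;> simp

lemma chainSum_succ (T : ℕ → ℕ → K) (h d : ℕ) :
    chainSum T (h + 1) d = ∑ k ∈ Finset.range d, chainSum T h k * T k d := by
  have hpen : ∀ f ∈ chains (h + 1) d, (f (Fin.last h).castSucc : ℕ) ∈ Finset.range d := by
    intro f hf
    obtain ⟨hmono, -, hlast⟩ := mem_chains.1 hf
    simpa [Fin.lt_def, hlast] using hmono (Fin.castSucc_lt_last (Fin.last h))
  rw [chainSum, ← Finset.sum_fiberwise_of_maps_to hpen]
  refine Finset.sum_congr rfl fun k hk => ?_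
  have hkd : k < d := Finset.mem_range.1 hk
  rw [chainSum, Finset.sum_mul]
  refine Finset.sum_nbij' (chainInit k) (chainSnoc hkd.le) (fun f hf => ?_)
    (fun g hg => ?_) (fun f hf => ?_) (fun g _ => chainInit_chainSnoc hkd.le g) (fun f hf => ?_)
  · obtain ⟨hf, hfk⟩ := Finset.mem_filter.1 hf
    exact chainInit_mem hf hfk
  · exact Finset.mem_filter.2 ⟨chainSnoc_mem hg hkd, by simp [chainSnoc, (mem_chains.1 hg).2.2]⟩
  · obtain ⟨hf, hfk⟩ := Finset.mem_filter.1 hf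
    exact chainSnoc_chainInit hf hfk hkd.le
  · obtain ⟨hf, hfk⟩ := Finset.mem_filter.1 hf
    have hval := val_chainInit (mem_chains.1 hf).1.monotone hfk
    rw [Fin.prod_univ_castSucc, hfk, Fin.succ_last, (mem_chains.1 hf).2.2]
    simp only [hval, Fin.succ_castSucc, Fin.val_last]

lemma chainSum_congr {T T' : ℕ → ℕ → K} {h d : ℕ}
    (hT : ∀ i j, i < j → j ≤ d → T i j = T' i j) : chainSum T h d = chainSum T' h d := by
  refine Finset.sum_congr rfl fun f hf => Finset.prod_congr rfl fun s _ => ?_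
  exact hT _ _ ((mem_chains.1 hf).1 s.castSucc_lt_succ) (f s.succ).is_le

lemma mpow_eq_chainSum (M : List K → K) (hM : M [] = 0) (h : ℕ) (l : List K) :
    mpow M h l = chainSum (fun i j => M ((l.drop i).take (j - i))) h l.length := by
  induction h generalizing l with
  | zero => cases l <;> simp [mpow, one, chainSum_zero]
  | succ h ih =>
    rw [mpow, mmul, Finset.sum_range_succ, List.drop_length, hM, mul_zero, add_zero,
      chainSum_succ]
    refine Finset.sum_congr rfl fun k hk => ?_
    have hkl : k < l.length := Finset.mem_range.1 hk
    rw [ih, List.length_take_of_le hkl.le, List.take_of_length_le (l := l.drop k) (by simp)]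
    congr 1
    refine chainSum_congr fun i j _ hj => ?_
    rw [List.drop_take, List.take_take, min_eq_left (by omega)]

lemma one_eq_zero_of_ne_nil {w : List K} (hw : w ≠ []) : one w = 0 := by
  cases w
  exacts [absurd rfl hw, rfl]

lemma paj_drop_take (l : List K) {i j : ℕ} (hj : j ≤ l.length) :
    paj ((l.drop i).take (j - i))
      = (∏ m ∈ Finset.Ioc i j, ((l.take m).sum - (l.take i).sum))⁻¹ := by
  rw [paj, List.length_take_of_le (by rw [List.length_drop]; omega),
    ← Finset.Ico_add_one_add_one_eq_Ioc, Finset.prod_Ico_eq_prod_range, Nat.add_sub_add_right]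
  congr 1
  refine Finset.prod_congr rfl fun k hk => ?_
  rw [List.take_take, min_eq_left (Finset.mem_range.1 hk), add_right_comm, add_assoc,
    List.take_add (l := l), List.sum_append, add_sub_cancel_left]

lemma psiNegOne_eq_chainSum (d : ℕ) (y : ℕ → K) :
    psiNegOne d y = (y d)⁻¹ * ∑ h ∈ Finset.Icc 1 d, ((-1 : K) ^ (h + 1) / (h : K)) *
      chainSum (fun i j => (∏ m ∈ Finset.Ioc i j, (y m - y i))⁻¹) h d :=
  rfl

theorem stmt14_general {K : Type*} [Field K] (d : ℕ)
    (l : List K) (hl : l.length = d) :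
    psiNegOne d (fun j => (l.take j).sum)
      = (l.sum)⁻¹ * ∑ h ∈ Finset.Icc 1 d, ((-1 : K) ^ (h + 1) / (h : K)) *
          mpow (fun w => paj w - one w) h l := by
  subst hl
  rw [psiNegOne_eq_chainSum, List.take_length]
  congr 1
  refine Finset.sum_congr rfl fun h _ => ?_
  rw [mpow_eq_chainSum (fun w : List K => paj w - one w) (by simp [paj, one])]
  congr 1
  refine chainSum_congr fun i j hij hj => ?_
  have hne : (l.drop i).take (j - i) ≠ [] := by
    simp only [ne_eq, List.take_eq_nil_iff, List.drop_eq_nil_iff]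
    omega
  rw [paj_drop_take l hj, one_eq_zero_of_ne_nil hne, sub_zero]

/-- after the substitution `x_j ↦ x_1 + ⋯ + x_j` (so `y j` is the `j`-th partial
sum of the list `l = (x_1,…,x_d)`, with `y 0 = 0`), Brown's polar solution satisfies
`ψ_{−1}^#(x_1,…,x_d) = (1/(x_1+⋯+x_d)) · log(paj)(x_1,…,x_d)`. -/
theorem stmt14 {K : Type*} [Field K] [CharZero K] (d : ℕ) (hd : 1 ≤ d)
    (l : List K) (hl : l.length = d) :
    psiNegOne d (fun j => (l.take j).sum)
      = (l.sum)⁻¹ * ∑ h ∈ Finset.Icc 1 d, ((-1 : K) ^ (h + 1) / (h : K)) *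
          mpow (fun w => paj w - one w) h l :=
  stmt14_general d l hl
end

section
/- Let sa_s(u) = u^{s-1}, so that S(x) = x^{2b} (b ≥ 1) is the length-one mould sa_{2b+1} and sa_{−1}(x) = 1/x^2. Then the length-two component of the ari-bracket satisfies ari(sa_{2b+1}, sa_{−1})^2(x_1,x_2) = ((x_1+x_2)^{2b} − x_2^{2b})/x_1^2 − ((x_1+x_2)^{2b} − x_1^{2b})/x_2^2 − (x_1^{2b} − x_2^{2b})/(x_1+x_2)^2, and this expression minus (2b x_2^{2b−1}/x_1 − 2b x_1^{2b−1}/x_2 + 2b x_2^{2b−1}/(x_1+x_2)) is a polynomial in x_1, x_2. -/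
/-- The field `ℚ(x_0, x_1, x_2, …)` of rational functions, in which the Laurent-series
identities take place. -/
noncomputable abbrev KK : Type := FractionRing (MvPolynomial ℕ ℚ)

/-- The formal variables `x_i`, viewed inside `KK`. -/
noncomputable def Xv (i : ℕ) : KK :=
  algebraMap (MvPolynomial ℕ ℚ) KK (MvPolynomial.X i)

/-- `arit(N)(M)` in length two, for moulds supported in length one. -/
def arit2 {K : Type*} [Field K] (g f : K → K) (x1 x2 : K) : K := f (x1 + x2) * (g x1 - g x2)

/-- `preari(M,N) = arit(N)(M) + M × N` in length two, for moulds supported in length one. -/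
def preari2 {K : Type*} [Field K] (f g : K → K) (x1 x2 : K) : K :=
  arit2 g f x1 x2 + f x1 * g x2

/-- `ari(M,N)` in length two, for moulds supported in length one. -/
def ari2 {K : Type*} [Field K] (f g : K → K) (x1 x2 : K) : K :=
  preari2 f g x1 x2 - preari2 g f x1 x2

/-- `sa_s(u) = u^{s−1}`, so `sa_{2b+1}(u) = u^{2b}` and `sa_{−1}(u) = u^{−2}`. -/
noncomputable def sa2b1 {K : Type*} [Field K] (b : ℕ) : K → K := fun u => u ^ (2 * b)

noncomputable def saNeg1 {K : Type*} [Field K] : K → K := fun u => (u ^ 2)⁻¹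

lemma key_dvd {R : Type*} [CommRing R] (x y : R) (n : ℕ) :
    x ^ 2 ∣ (x + y) ^ (n + 1) - y ^ (n + 1) - (n + 1 : ℕ) * x * y ^ n := by
  induction n with
  | zero => simp
  | succ n ih =>
    obtain ⟨c, hc⟩ := ih
    refine ⟨(x + y) * c + (n + 1 : ℕ) * y ^ n, ?_⟩
    have h : (x + y) ^ (n + 2) - y ^ (n + 2) - ((n + 2 : ℕ) : R) * x * y ^ (n + 1)
        = (x + y) * ((x + y) ^ (n + 1) - y ^ (n + 1) - ((n + 1 : ℕ) : R) * x * y ^ n)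
          + x ^ 2 * (((n + 1 : ℕ) : R) * y ^ n) := by push_cast; ring
    push_cast at h hc ⊢
    linear_combination h + (x + y) * hc


set_option maxHeartbeats 1000000 in
/-- `ari(sa_{2b+1}, sa_{−1})^2(x_1,x_2)` equals the displayed rational function,
and that expression minus `2b x_2^{2b−1}/x_1 − 2b x_1^{2b−1}/x_2 + 2b x_2^{2b−1}/(x_1+x_2)`
is a polynomial in `x_1, x_2` (with rational coefficients). -/
theorem stmt16 (b : ℕ) (hb : 1 ≤ b) :
    (∀ x1 x2 : KK,
      ari2 (sa2b1 b) saNeg1 x1 x2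
        = ((x1 + x2) ^ (2 * b) - x2 ^ (2 * b)) / x1 ^ 2
            - ((x1 + x2) ^ (2 * b) - x1 ^ (2 * b)) / x2 ^ 2
            - (x1 ^ (2 * b) - x2 ^ (2 * b)) / (x1 + x2) ^ 2) ∧
    (∃ p : MvPolynomial (Fin 2) ℚ,
      ari2 (sa2b1 b) saNeg1 (Xv 1) (Xv 2)
          - ((2 * b : KK) * (Xv 2) ^ (2 * b - 1) / Xv 1
              - (2 * b : KK) * (Xv 1) ^ (2 * b - 1) / Xv 2
              + (2 * b : KK) * (Xv 2) ^ (2 * b - 1) / (Xv 1 + Xv 2))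
        = MvPolynomial.eval₂ (Rat.castHom KK) ![Xv 1, Xv 2] p) := by
  have part1 : ∀ x1 x2 : KK,
      ari2 (sa2b1 b) saNeg1 x1 x2
        = ((x1 + x2) ^ (2 * b) - x2 ^ (2 * b)) / x1 ^ 2
            - ((x1 + x2) ^ (2 * b) - x1 ^ (2 * b)) / x2 ^ 2
            - (x1 ^ (2 * b) - x2 ^ (2 * b)) / (x1 + x2) ^ 2 := by
    intro x1 x2
    simp only [ari2, preari2, arit2, sa2b1, saNeg1, div_eq_mul_inv]
    ring
  refine ⟨part1, ?_⟩
  -- notation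
  have hinj : Function.Injective (algebraMap (MvPolynomial ℕ ℚ) KK) :=
    IsFractionRing.injective _ _
  have hX : ∀ i : ℕ, Xv i ≠ 0 := fun i h =>
    MvPolynomial.X_ne_zero i (hinj (by simpa [Xv] using h))
  have h12 : Xv 1 + Xv 2 ≠ 0 := by
    intro h
    have h' : (MvPolynomial.X 1 + MvPolynomial.X 2 : MvPolynomial ℕ ℚ) = 0 := by
      apply hinj; simpa [Xv] using h
    have := congrArg (MvPolynomial.eval (fun i => if i = 1 then (1:ℚ) else 0)) h'
    simp at this
  set x : MvPolynomial (Fin 2) ℚ := MvPolynomial.X 0 with hx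
  set y : MvPolynomial (Fin 2) ℚ := MvPolynomial.X 1 with hy
  have h2b : 2 * b - 1 + 1 = 2 * b := by omega
  obtain ⟨q1, hq1⟩ := key_dvd x y (2 * b - 1)
  obtain ⟨q2, hq2⟩ := key_dvd y x (2 * b - 1)
  obtain ⟨q3, hq3⟩ := key_dvd (x + y) (-y) (2 * b - 1)
  rw [h2b] at hq1 hq2 hq3
  have heven : (-y) ^ (2 * b) = y ^ (2 * b) := (even_two_mul b).neg_pow y
  have hodd : (-y) ^ (2 * b - 1) = -(y ^ (2 * b - 1)) := by
    have : Odd (2 * b - 1) := ⟨b - 1, by omega⟩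
    exact this.neg_pow y
  rw [add_neg_cancel_right, heven, hodd] at hq3
  -- the evaluation hom
  set φ : MvPolynomial (Fin 2) ℚ →+* KK :=
    MvPolynomial.eval₂Hom (Rat.castHom KK) ![Xv 1, Xv 2] with hφ
  have φx : φ x = Xv 1 := by simp [hφ, hx]
  have φy : φ y = Xv 2 := by simp [hφ, hy]
  refine ⟨q1 - q2 - q3, ?_⟩
  have e1 := congrArg φ hq1
  have e2 := congrArg φ hq2
  have e3 := congrArg φ hq3
  simp only [map_sub, map_add, map_mul, map_pow, map_natCast, φx, φy, map_neg] at e1 e2 e3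
  have goal_rhs : MvPolynomial.eval₂ (Rat.castHom KK) ![Xv 1, Xv 2] (q1 - q2 - q3)
      = φ q1 - φ q2 - φ q3 := by simp [hφ]
  rw [part1, goal_rhs]
  have hx1 := hX 1
  have hx2 := hX 2
  push_cast at e1 e2 e3
  have c1 : (2 * b : KK) * (Xv 2) ^ (2 * b - 1) / Xv 1 * Xv 1
      = (2 * b : KK) * (Xv 2) ^ (2 * b - 1) := div_mul_cancel₀ _ hx1
  have c2 : (2 * b : KK) * (Xv 1) ^ (2 * b - 1) / Xv 2 * Xv 2
      = (2 * b : KK) * (Xv 1) ^ (2 * b - 1) := div_mul_cancel₀ _ hx2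
  have c3 : (2 * b : KK) * (Xv 2) ^ (2 * b - 1) / (Xv 1 + Xv 2) * (Xv 1 + Xv 2)
      = (2 * b : KK) * (Xv 2) ^ (2 * b - 1) := div_mul_cancel₀ _ h12
  have hA : ((Xv 1 + Xv 2) ^ (2 * b) - (Xv 2) ^ (2 * b)) / (Xv 1) ^ 2
      = φ q1 + (2 * b : KK) * (Xv 2) ^ (2 * b - 1) / Xv 1 := by
    rw [div_eq_iff (pow_ne_zero 2 hx1)]
    linear_combination e1 - Xv 1 * c1
  have hB : ((Xv 1 + Xv 2) ^ (2 * b) - (Xv 1) ^ (2 * b)) / (Xv 2) ^ 2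
      = φ q2 + (2 * b : KK) * (Xv 1) ^ (2 * b - 1) / Xv 2 := by
    rw [div_eq_iff (pow_ne_zero 2 hx2)]
    linear_combination e2 - Xv 2 * c2
  have hC : ((Xv 1) ^ (2 * b) - (Xv 2) ^ (2 * b)) / (Xv 1 + Xv 2) ^ 2
      = φ q3 - (2 * b : KK) * (Xv 2) ^ (2 * b - 1) / (Xv 1 + Xv 2) := by
    rw [div_eq_iff (pow_ne_zero 2 h12)]
    linear_combination e3 + (Xv 1 + Xv 2) * c3
  rw [hA, hB, hC]
  ring
end

section
/- For any mould S with S^0 = 1 and any mould A with A^0 = 0, the length-two component of adari(S)(A) is given by adari(S)(A)^2(x_1,x_2) = A^2(x_1,x_2) + (S^1(x_1+x_2) − S^1(x_2))A^1(x_1) − (S^1(x_1+x_2) − S^1(x_1))A^1(x_2) + (S^1(x_2) − S^1(x_1))A^1(x_1+x_2), where adari(S)(A) := logari(gari(S, expari(A), invgari(S))) and the length-one component is adari(S)(A)^1(x_1) = A^1(x_1). -/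
variable {K : Type*} [Field K]

/- We work with moulds truncated at length two: a mould with value `1` (resp. `0`) in length
zero is represented by the pair of its length-one component `S1 : K → K` and its length-two
component `S2 : K → K → K`.  In this truncation the operations `gari`, `expari`, `logari`,
`invgari` are given by the explicit low-length formulas recalled in the context. -/

/-- Length-one component of `gari(S,T)`. -/
def gari1 (S1 T1 : K → K) : K → K := fun x => S1 x + T1 x

/-- Length-two component of `gari(S,T)`:
`gari(S,T)^2(x,y) = S^2(x,y) + S^1(x+y)(T^1(x) − T^1(y)) + S^1(x)T^1(y) + T^2(x,y)`. -/
def gari2 (S1 T1 : K → K) (S2 T2 : K → K → K) : K → K → K := fun x y =>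
  S2 x y + S1 (x + y) * (T1 x - T1 y) + S1 x * T1 y + T2 x y

/-- Length-one component of `expari(A)`. -/
def expari1 (A1 : K → K) : K → K := A1

/-- Length-two component of `expari(A)`. -/
def expari2 (A1 : K → K) (A2 : K → K → K) : K → K → K := fun x y =>
  A2 x y + (1 / 2 : K) * (A1 (x + y) * (A1 x - A1 y) + A1 x * A1 y)

/-- Length-one component of `logari(S)`. -/
def logari1 (S1 : K → K) : K → K := S1

/-- Length-two component of `logari(S)` (the inverse of `expari` through length two). -/
def logari2 (S1 : K → K) (S2 : K → K → K) : K → K → K := fun x y =>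
  S2 x y - (1 / 2 : K) * (S1 (x + y) * (S1 x - S1 y) + S1 x * S1 y)

/-- Length-one component of `invgari(S)`, the gari-inverse of `S`. -/
def invgari1 (S1 : K → K) : K → K := fun x => - S1 x

/-- Length-two component of `invgari(S)`, the gari-inverse of `S`. -/
def invgari2 (S1 : K → K) (S2 : K → K → K) : K → K → K := fun x y =>
  - S2 x y + S1 (x + y) * (S1 x - S1 y) + S1 x * S1 y

/-- Length-one component of `adari(S)(A) = logari(gari(S, expari(A), invgari(S)))`. -/
def adari1 (S1 A1 : K → K) : K → K :=
  logari1 (gari1 (gari1 S1 (expari1 A1)) (invgari1 S1))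

/-- Length-two component of `adari(S)(A) = logari(gari(S, expari(A), invgari(S)))`. -/
def adari2 (S1 A1 : K → K) (S2 A2 : K → K → K) : K → K → K :=
  logari2 (gari1 (gari1 S1 (expari1 A1)) (invgari1 S1))
    (gari2 (gari1 S1 (expari1 A1)) (invgari1 S1)
      (gari2 S1 (expari1 A1) S2 (expari2 A1 A2)) (invgari2 S1 S2))

/-- for any mould `S` with `S^0 = 1` and any mould `A` with `A^0 = 0`,
`adari(S)(A)^1(x_1) = A^1(x_1)` and
`adari(S)(A)^2(x_1,x_2) = A^2(x_1,x_2) + (S^1(x_1+x_2) − S^1(x_2))A^1(x_1)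
  − (S^1(x_1+x_2) − S^1(x_1))A^1(x_2) + (S^1(x_2) − S^1(x_1))A^1(x_1+x_2)`. -/
theorem stmt19 (S1 A1 : K → K) (S2 A2 : K → K → K) (x1 x2 : K) :
    adari1 S1 A1 x1 = A1 x1 ∧
      adari2 S1 A1 S2 A2 x1 x2
        = A2 x1 x2 + (S1 (x1 + x2) - S1 x2) * A1 x1 - (S1 (x1 + x2) - S1 x1) * A1 x2
            + (S1 x2 - S1 x1) * A1 (x1 + x2) := by
  constructor
  · simp only [adari1, logari1, gari1, expari1, invgari1]; ring
  · simp only [adari1, adari2, logari1, logari2, gari1, gari2, expari1, expari2, invgari1, invgari2]; ring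
end
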